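/- arXiv:1401.3236 — 2 statements merged into one kernel-verified Lean document; each statement's English description precedes it below -/
import Mathlib

section
/- If a Volterra kernel h on [0,T]×[0,T] (square-integrable on the region {0 ≤ s < t ≤ T}, and zero for s > t) is homogeneous of degree -1, i.e. h(t,s) = (1/a)·h(t/a, s/a) for all a > 0 and 0 ≤ s < t ≤ T, then h vanishes almost everywhere on [0,T]×[0,T]. -/
/-!
The substitution `(t, s) ↦ (a t, a s)` has Jacobian `a²`, which exactly compensates the factor
`a⁻²` that homogeneity puts on `h²`. Hence `∫ h²` over the triangle `0 ≤ s < t ≤ T / a` does not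
depend on `a`. As `a → ∞` these triangles decrease to the empty set, so the common value is `0`
and `h` vanishes a.e. on the triangle `0 ≤ s < t ≤ T`. Where `s > t`, `h` vanishes by the
Volterra condition, and the diagonal is a null set.
-/

open MeasureTheory Set Filter Module Pointwise

theorem setIntegral_smul_eq_of_homogeneous {E F : Type*} [NormedAddCommGroup E] [NormedSpace ℝ E]
    [FiniteDimensional ℝ E] [MeasurableSpace E] [BorelSpace E] [NormedAddCommGroup F]
    [NormedSpace ℝ F] (μ : Measure E) [μ.IsAddHaarMeasure] {f : E → F} {s : Set E} {R : ℝ}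
    (hR : 0 < R) (hs : MeasurableSet s) (hf : ∀ x ∈ s, f (R • x) = (R ^ finrank ℝ E)⁻¹ • f x) :
    ∫ x in R • s, f x ∂μ = ∫ x in s, f x ∂μ := by
  have hscale := μ.setIntegral_comp_smul_of_pos f s hR
  rw [setIntegral_congr_fun hs hf, integral_smul] at hscale
  exact (smul_right_injective F (by positivity : (R ^ finrank ℝ E)⁻¹ ≠ 0) hscale).symm

theorem ae_prod_fst_ne_snd {α : Type*} [MeasurableSpace α] [MeasurableEq α] (μ ν : Measure α)
    [SFinite ν] [NullSingletonClass ν] : ∀ᵐ p ∂μ.prod ν, p.1 ≠ p.2 :=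
  (Measure.ae_prod_mem_iff_ae_ae_mem measurableSet_diagonal.compl).2 <|
    ae_of_all _ fun x => (ν.ae_ne x).mono fun _ hy => hy.symm

def triangle (c : ℝ) : Set (ℝ × ℝ) := {p | 0 ≤ p.2 ∧ p.2 < p.1 ∧ p.1 ≤ c}

theorem measurableSet_triangle (c : ℝ) : MeasurableSet (triangle c) :=
  (measurableSet_le measurable_const measurable_snd).inter
    ((measurableSet_lt measurable_snd measurable_fst).inter
      (measurableSet_le measurable_fst measurable_const))

theorem smul_triangle {a : ℝ} (ha : 0 < a) (c : ℝ) : a • triangle c = triangle (a * c) := by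
  ext p
  rw [mem_smul_set_iff_inv_smul_mem₀ ha.ne']
  simp only [triangle, mem_ofPred_eq, Prod.smul_fst, Prod.smul_snd, smul_eq_mul,
    inv_mul_le_iff₀ ha, mul_lt_mul_iff_right₀ (inv_pos.2 ha)]
  rw [mul_nonneg_iff_of_pos_left (inv_pos.2 ha)]

theorem antitone_triangle_div (c : ℝ) : Antitone fun n : ℕ => triangle (c / (n + 1)) := by
  intro m n hmn p ⟨hp0, hpt, hpc⟩
  have hc : 0 ≤ c := by
    have := (hp0.trans_lt hpt).le.trans hpc
    rwa [le_div_iff₀ n.cast_add_one_pos, zero_mul] at this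
  exact ⟨hp0, hpt, hpc.trans (div_le_div_of_nonneg_left hc m.cast_add_one_pos (by gcongr))⟩

theorem iInter_triangle_div (c : ℝ) : ⋂ n : ℕ, triangle (c / (n + 1)) = ∅ := by
  refine eq_empty_of_forall_notMem fun p hp => ?_
  obtain ⟨hp0, hpt, -⟩ := mem_iInter.1 hp 0
  obtain ⟨n, hn⟩ := exists_nat_gt (c / p.1)
  have hpn := (mem_iInter.1 hp n).2.2
  rw [div_lt_iff₀ (hp0.trans_lt hpt)] at hn
  rw [le_div_iff₀ (by positivity)] at hpn
  nlinarith

theorem setIntegral_triangle_eq_zero_of_homogeneous {f : ℝ × ℝ → ℝ} {c : ℝ}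
    (hf : IntegrableOn f (triangle c))
    (hhom : ∀ a : ℝ, 0 < a → ∀ p ∈ triangle (c / a), f (a • p) = (a ^ 2)⁻¹ * f p) :
    ∫ p in triangle c, f p = 0 := by
  have hscale (n : ℕ) : ∫ p in triangle (c / (n + 1)), f p = ∫ p in triangle c, f p := by
    have ha : (0 : ℝ) < n + 1 := n.cast_add_one_pos
    have hhom' : ∀ p ∈ triangle (c / (n + 1)),
        f (((n : ℝ) + 1) • p) = (((n : ℝ) + 1) ^ finrank ℝ (ℝ × ℝ))⁻¹ • f p := by
      simpa only [finrank_prod, finrank_self, smul_eq_mul] using hhom _ ha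
    have := setIntegral_smul_eq_of_homogeneous volume ha (measurableSet_triangle _) hhom'
    rw [smul_triangle ha, mul_div_cancel₀ _ ha.ne'] at this
    exact this.symm
  have hlim := tendsto_setIntegral_of_antitone (μ := volume) (fun _ => measurableSet_triangle _)
    (antitone_triangle_div c) ⟨0, by simpa using hf⟩
  simp only [hscale, iInter_triangle_div, Measure.restrict_empty, integral_zero_measure] at hlim
  exact tendsto_nhds_unique tendsto_const_nhds hlim

theorem volterra_kernel_homogeneous_neg_one_vanishes_general
    (T : ℝ) (h : ℝ → ℝ → ℝ)
    (hL2 : IntegrableOn (fun p : ℝ × ℝ => (h p.1 p.2) ^ 2)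
      {p : ℝ × ℝ | 0 ≤ p.2 ∧ p.2 < p.1 ∧ p.1 ≤ T})
    (hvol : ∀ t s : ℝ, t < s → h t s = 0)
    (hhom : ∀ a : ℝ, 0 < a → ∀ t s : ℝ, 0 ≤ s → s < t → t ≤ T →
      h t s = a⁻¹ * h (t / a) (s / a)) :
    ∀ᵐ p ∂(volume.restrict ((Icc (0:ℝ) T) ×ˢ (Icc (0:ℝ) T))), h (Prod.fst p) (Prod.snd p) = 0 := by
  have hsq_hom : ∀ a : ℝ, 0 < a → ∀ p ∈ triangle (T / a),
      h (a • p).1 (a • p).2 ^ 2 = (a ^ 2)⁻¹ * h p.1 p.2 ^ 2 := by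
    intro a ha p hp
    have hap : a • p ∈ triangle T := by
      simpa [smul_triangle ha, mul_div_cancel₀ _ ha.ne'] using smul_mem_smul_set (a := a) hp
    obtain ⟨hs0, hst, htT⟩ := hap
    rw [hhom a ha _ _ hs0 hst htT]
    simp only [Prod.smul_fst, Prod.smul_snd, smul_eq_mul, mul_div_cancel_left₀ _ ha.ne']
    ring
  have hint := setIntegral_triangle_eq_zero_of_homogeneous hL2 hsq_hom
  have htri : ∀ᵐ p, p ∈ triangle T → h p.1 p.2 = 0 := by
    rw [← ae_restrict_iff' (measurableSet_triangle T)]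
    filter_upwards [(integral_eq_zero_iff_of_nonneg (fun _ => sq_nonneg _) hL2).1 hint] with p hp
    exact pow_eq_zero_iff two_ne_zero |>.1 hp
  have hdiag : ∀ᵐ p : ℝ × ℝ, p.1 ≠ p.2 := by
    rw [Measure.volume_eq_prod]
    exact ae_prod_fst_ne_snd volume volume
  rw [ae_restrict_iff' (measurableSet_Icc.prod measurableSet_Icc)]
  filter_upwards [htri, hdiag] with p hp hne
  rintro ⟨⟨-, htT⟩, ⟨hs0, -⟩⟩
  rcases hne.lt_or_gt with hts | hst
  · exact hvol _ _ hts
  · exact hp ⟨hs0, hst, htT⟩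

/-- A square-integrable Volterra kernel on `[0,T] × [0,T]` that is homogeneous of
degree `-1` vanishes almost everywhere on `[0,T] × [0,T]`. -/
theorem volterra_kernel_homogeneous_neg_one_vanishes
    (T : ℝ) (hT : 0 < T) (h : ℝ → ℝ → ℝ)
    (hmeas : Measurable (Function.uncurry h))
    (hL2 : IntegrableOn (fun p : ℝ × ℝ => (h p.1 p.2) ^ 2)
      {p : ℝ × ℝ | 0 ≤ p.2 ∧ p.2 < p.1 ∧ p.1 ≤ T})
    (hvol : ∀ t s : ℝ, t < s → h t s = 0)
    (hhom : ∀ a : ℝ, 0 < a → ∀ t s : ℝ, 0 ≤ s → s < t → t ≤ T →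
      h t s = a⁻¹ * h (t / a) (s / a)) :
    ∀ᵐ p ∂(volume.restrict ((Icc (0:ℝ) T) ×ˢ (Icc (0:ℝ) T))), h (Prod.fst p) (Prod.snd p) = 0 :=
  volterra_kernel_homogeneous_neg_one_vanishes_general T h hL2 hvol hhom
end

section
/- Two integrable functions f, g on (0, T] with equal Mellin transforms, ∫₀^∞ f(s) s^(p−1) ds = ∫₀^∞ g(s) s^(p−1) ds for all p in a suitable range (e.g. all p in an interval where both integrals converge absolutely), are equal almost everywhere. -/
/-!
Put `F = f - g`. Since `F` vanishes beyond `T`, its Mellin transform converges on the whole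
half-plane `a < re s`, where it is holomorphic (differentiation under the integral sign, the
logarithmic factor being absorbed by two neighbouring exponents). It vanishes on the real segment
`(a, b)`, hence on the half-plane by the identity theorem. In particular every moment
`∫₀ᵀ tⁿ ψ(t) dt` of `ψ(t) = t ^ a F(t)` vanishes, so `ψ` integrates to zero against every
polynomial, hence (Weierstrass) against every continuous function, and `ψ = 0` almost everywhere.
-/

open MeasureTheory Set Filter Topology

lemma Real.rpow_le_rpow_add_rpow {t x σ₁ σ₂ : ℝ} (ht : 0 < t) (h₁ : σ₁ ≤ x) (h₂ : x ≤ σ₂) :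
    t ^ x ≤ t ^ σ₁ + t ^ σ₂ := by
  rcases le_or_gt 1 t with h1t | ht1
  · exact (Real.rpow_le_rpow_of_exponent_le h1t h₂).trans (le_add_of_nonneg_left (by positivity))
  · exact (Real.rpow_le_rpow_of_exponent_ge ht ht1.le h₁).trans
      (le_add_of_nonneg_right (by positivity))

lemma Real.rpow_mul_abs_log_le {t x σ₁ σ₂ v : ℝ} (ht : 0 < t) (hv : 0 < v)
    (h₁ : σ₁ + v ≤ x) (h₂ : x + v ≤ σ₂) :
    t ^ x * |Real.log t| ≤ (t ^ σ₁ + t ^ σ₂) / v := by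
  rcases le_or_gt 1 t with h1t | ht1
  · calc t ^ x * |Real.log t| ≤ t ^ x * (t ^ v / v) := by
          rw [abs_of_nonneg (Real.log_nonneg h1t)]
          gcongr
          exact Real.log_le_rpow_div ht.le hv
      _ = t ^ (x + v) / v := by rw [Real.rpow_add ht]; ring
      _ ≤ t ^ σ₂ / v := by gcongr
      _ ≤ (t ^ σ₁ + t ^ σ₂) / v := by gcongr; exact le_add_of_nonneg_left (by positivity)
  · calc t ^ x * |Real.log t| ≤ t ^ x * (t⁻¹ ^ v / v) := by
          rw [abs_of_neg (Real.log_neg ht ht1), ← Real.log_inv]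
          gcongr
          exact Real.log_le_rpow_div (by positivity) hv
      _ = t ^ (x - v) / v := by rw [Real.inv_rpow ht.le, Real.rpow_sub ht]; ring
      _ ≤ t ^ σ₁ / v := by
          gcongr ?_ / v; exact Real.rpow_le_rpow_of_exponent_ge ht ht1.le (by linarith)
      _ ≤ (t ^ σ₁ + t ^ σ₂) / v := by gcongr; exact le_add_of_nonneg_right (by positivity)

theorem Complex.eqOn_zero_of_eq_zero_on_Ioo {E : Type*} [NormedAddCommGroup E] [NormedSpace ℂ E]
    [CompleteSpace E] {G : ℂ → E} {U : Set ℂ} (hG : DifferentiableOn ℂ G U) (hU : IsOpen U)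
    (hUc : IsPreconnected U) {a b : ℝ} (hab : a < b) (hsub : ∀ x ∈ Ioo a b, (x : ℂ) ∈ U)
    (h₀ : ∀ x ∈ Ioo a b, G x = 0) : EqOn G 0 U := by
  obtain ⟨x₀, hx₀⟩ := nonempty_Ioo.2 hab
  have hreal : ∀ᶠ x : ℝ in 𝓝[≠] x₀, G x = 0 :=
    eventually_nhdsWithin_of_eventually_nhds (eventually_of_mem (Ioo_mem_nhds hx₀.1 hx₀.2) h₀)
  have hofReal : Tendsto ((↑) : ℝ → ℂ) (𝓝[≠] x₀) (𝓝[≠] (x₀ : ℂ)) :=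
    tendsto_nhdsWithin_of_tendsto_nhds_of_eventually_within _
      (continuous_ofReal.continuousWithinAt.tendsto)
      (eventually_nhdsWithin_of_forall fun x hx => ofReal_injective.ne hx)
  exact (hG.analyticOnNhd hU).eqOn_zero_of_preconnected_of_frequently_eq_zero hUc (hsub x₀ hx₀)
    (hofReal.frequently hreal.frequently)

theorem ae_eq_zero_of_integral_pow_smul_eq_zero {E : Type*} [NormedAddCommGroup E]
    [NormedSpace ℝ E] [CompleteSpace E] {μ : Measure ℝ} {ψ : ℝ → E} {c d : ℝ}
    (hμ : ∀ᵐ x ∂μ, x ∈ Icc c d) (hψ : Integrable ψ μ) (h : ∀ n : ℕ, ∫ x, x ^ n • ψ x ∂μ = 0) :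
    ψ =ᵐ[μ] 0 := by
  have hint : ∀ v : ℝ → ℝ, Continuous v → Integrable (fun x => v x • ψ x) μ := fun v hv => by
    obtain ⟨C, hC⟩ := isCompact_Icc.exists_bound_of_continuousOn hv.continuousOn
    exact hψ.bdd_smul C hv.aestronglyMeasurable (hμ.mono fun x hx => hC x hx)
  have hpoly : ∀ P : Polynomial ℝ, ∫ x, P.eval x • ψ x ∂μ = 0 := fun P => by
    induction P using Polynomial.induction_on' with
    | add p q hp hq =>
      simp only [Polynomial.eval_add, add_smul]
      rw [integral_add (hint _ p.continuous) (hint _ q.continuous), hp, hq, add_zero]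
    | monomial n a =>
      simp only [Polynomial.eval_monomial, mul_smul]
      rw [integral_smul, h n, smul_zero]
  refine ae_eq_zero_of_integral_contDiff_smul_eq_zero hψ.locallyIntegrable fun g hg _ => ?_
  refine norm_le_zero_iff.1 (le_of_forall_pos_le_add fun δ hδ => ?_)
  set J := ∫ x, ‖ψ x‖ ∂μ
  have hJ : 0 ≤ J := integral_nonneg fun x => norm_nonneg _
  obtain ⟨P, hP⟩ := exists_polynomial_near_of_continuousOn c d g hg.continuous.continuousOn
    (δ / (J + 1)) (by positivity)
  have hgP : ∫ x, g x • ψ x ∂μ = ∫ x, (g x - P.eval x) • ψ x ∂μ := by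
    simp only [sub_smul]
    rw [integral_sub (hint g hg.continuous) (hint _ P.continuous), hpoly, sub_zero]
  calc ‖∫ x, g x • ψ x ∂μ‖ ≤ ∫ x, δ / (J + 1) * ‖ψ x‖ ∂μ := by
        rw [hgP]
        refine norm_integral_le_of_norm_le (hψ.norm.const_mul _) (hμ.mono fun x hx => ?_)
        rw [norm_smul, Real.norm_eq_abs, abs_sub_comm]
        gcongr
        exact (hP x hx).le
    _ = δ * (J / (J + 1)) := by rw [integral_const_mul]; ring
    _ ≤ 0 + δ := by
        rw [zero_add]
        exact mul_le_of_le_one_right hδ.le ((div_le_one (by positivity)).2 (by linarith))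

lemma Complex.cpow_sub_one_smul_ofReal {t : ℝ} (ht : 0 < t) (y p : ℝ) :
    (t : ℂ) ^ ((p : ℂ) - 1) • (y : ℂ) = ((y * t ^ (p - 1) : ℝ) : ℂ) := by
  rw [smul_eq_mul, mul_comm, Complex.ofReal_mul, Complex.ofReal_cpow ht.le]
  norm_num

theorem mellinConvergent_ofReal {u : ℝ → ℝ} {p : ℝ}
    (hu : IntegrableOn (fun t => u t * t ^ (p - 1)) (Ioi 0)) :
    MellinConvergent (fun t => (u t : ℂ)) p :=
  IntegrableOn.congr_fun (hu.ofReal (𝕜 := ℂ))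
    (fun _ ht => (Complex.cpow_sub_one_smul_ofReal ht _ _).symm) measurableSet_Ioi

theorem mellin_ofReal (u : ℝ → ℝ) (p : ℝ) :
    mellin (fun t => (u t : ℂ)) p = ((∫ t in Ioi 0, u t * t ^ (p - 1) : ℝ) : ℂ) := by
  rw [mellin, ← integral_complex_ofReal]
  exact setIntegral_congr_fun measurableSet_Ioi fun _ ht =>
    Complex.cpow_sub_one_smul_ofReal ht _ _

section Mellin

variable {E : Type*} [NormedAddCommGroup E] [NormedSpace ℂ E]

theorem MellinConvergent.of_re_mem_Icc {f : ℝ → E} {σ₁ σ₂ : ℝ} {s : ℂ}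
    (hf : AEStronglyMeasurable f (volume.restrict (Ioi 0)))
    (h₁ : MellinConvergent f σ₁) (h₂ : MellinConvergent f σ₂) (hs : s.re ∈ Icc σ₁ σ₂) :
    MellinConvergent f s := by
  rw [MellinConvergent, mellin_convergent_iff_norm subset_rfl measurableSet_Ioi hf] at h₁ h₂ ⊢
  refine (h₁.add h₂).mono' ((measurable_id.pow_const _).aestronglyMeasurable.mul hf.norm) ?_
  filter_upwards [ae_restrict_mem measurableSet_Ioi] with t ht
  simp only [Complex.ofReal_re, norm_mul, Real.norm_eq_abs, abs_norm, Pi.add_apply, ← add_mul,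
    abs_of_pos (Real.rpow_pos_of_pos ht _)]
  gcongr
  exact Real.rpow_le_rpow_add_rpow ht (by linarith [hs.1]) (by linarith [hs.2])

theorem mellin_differentiableAt_of_mellinConvergent {f : ℝ → E} {σ₁ σ₂ : ℝ} {s : ℂ}
    (hf : AEStronglyMeasurable f (volume.restrict (Ioi 0)))
    (h₁ : MellinConvergent f σ₁) (h₂ : MellinConvergent f σ₂)
    (hs₁ : σ₁ < s.re) (hs₂ : s.re < σ₂) :
    DifferentiableAt ℂ (mellin f) s := by
  set v := min (s.re - σ₁) (σ₂ - s.re) / 2 with hv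
  have hv0 : 0 < v := by positivity
  have hre : ∀ z ∈ Metric.ball s v, σ₁ + v ≤ z.re ∧ z.re + v ≤ σ₂ := by
    intro z hz
    have hz' := (Complex.abs_re_le_norm (z - s)).trans (mem_ball_iff_norm.1 hz).le
    rw [Complex.sub_re, abs_le] at hz'
    have := min_le_left (s.re - σ₁) (σ₂ - s.re)
    have := min_le_right (s.re - σ₁) (σ₂ - s.re)
    constructor <;> linarith [hz'.1, hz'.2]
  have hcpow : ∀ z : ℂ, ContinuousOn (fun t : ℝ => (t : ℂ) ^ (z - 1)) (Ioi 0) := fun z =>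
    continuousOn_of_forall_continuousAt fun t ht =>
      Complex.continuousAt_ofReal_cpow_const _ _ (Or.inr (ne_of_gt ht))
  have hlog : ContinuousOn (fun t : ℝ => (Real.log t : ℂ)) (Ioi 0) :=
    Complex.continuous_ofReal.comp_continuousOn
      (Real.continuousOn_log.mono fun t ht => ne_of_gt ht)
  have hbound :
      IntegrableOn (fun t : ℝ => (t ^ (σ₁ - 1) + t ^ (σ₂ - 1)) / v * ‖f t‖) (Ioi 0) := by
    rw [MellinConvergent, mellin_convergent_iff_norm subset_rfl measurableSet_Ioi hf] at h₁ h₂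
    simp only [Complex.ofReal_re] at h₁ h₂
    refine ((h₁.add h₂).div_const v).congr (Eventually.of_forall fun t => ?_)
    simp only [Pi.add_apply]
    ring
  have hderiv : ∀ z ∈ Metric.ball s v, ∀ t ∈ Ioi (0 : ℝ),
      ‖((t : ℂ) ^ (z - 1) * Real.log t) • f t‖ ≤ (t ^ (σ₁ - 1) + t ^ (σ₂ - 1)) / v * ‖f t‖ := by
    intro z hz t ht
    rw [norm_smul, norm_mul, Complex.norm_cpow_eq_rpow_re_of_pos ht, Complex.norm_real,
      Real.norm_eq_abs, Complex.sub_re, Complex.one_re]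
    gcongr
    obtain ⟨hz₁, hz₂⟩ := hre z hz
    exact Real.rpow_mul_abs_log_le ht hv0 (by linarith) (by linarith)
  have key := hasDerivAt_integral_of_dominated_loc_of_deriv_le (Metric.ball_mem_nhds s hv0)
    (F := fun (z : ℂ) (t : ℝ) => (t : ℂ) ^ (z - 1) • f t)
    (F' := fun (z : ℂ) (t : ℝ) => ((t : ℂ) ^ (z - 1) * Real.log t) • f t)
    (Eventually.of_forall fun z => ((hcpow z).aestronglyMeasurable measurableSet_Ioi).smul hf)
    (h₁.of_re_mem_Icc hf h₂ ⟨hs₁.le, hs₂.le⟩)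
    ((((hcpow s).mul hlog).aestronglyMeasurable measurableSet_Ioi).smul hf)
    ((ae_restrict_mem measurableSet_Ioi).mono fun t ht z hz => hderiv z hz t ht) hbound
    ((ae_restrict_mem measurableSet_Ioi).mono fun t ht z _ => ?_)
  · exact key.2.differentiableAt
  · have ht' : (t : ℂ) ≠ 0 := Complex.ofReal_ne_zero.2 (ne_of_gt ht)
    have := ((hasDerivAt_id z).sub_const 1).const_cpow (c := (t : ℂ)) (Or.inl ht')
    rw [Complex.ofReal_log (le_of_lt ht)]
    simpa using this.smul_const (f t)

theorem mellin_differentiableOn_of_mellinConvergent {f : ℝ → E} {a : ℝ}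
    (hf : AEStronglyMeasurable f (volume.restrict (Ioi 0)))
    (hconv : ∀ s : ℂ, a < s.re → MellinConvergent f s) :
    DifferentiableOn ℂ (mellin f) {s : ℂ | a < s.re} := fun s (hs : a < s.re) =>
  (mellin_differentiableAt_of_mellinConvergent hf
    (hconv ((a + s.re) / 2 : ℝ) (by rw [Complex.ofReal_re]; linarith))
    (hconv (s.re + 1 : ℝ) (by rw [Complex.ofReal_re]; linarith))
    (by linarith) (by linarith)).differentiableWithinAt

theorem MellinConvergent.of_re_le {f : ℝ → E} {T : ℝ} (hfT : ∀ t, T < t → f t = 0) {s s' : ℂ}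
    (hf : MellinConvergent f s) (hss' : s.re ≤ s'.re) : MellinConvergent f s' := by
  rw [← add_sub_cancel s s', ← MellinConvergent.cpow_smul, MellinConvergent]
  simp_rw [smul_comm _ ((_ : ℂ) ^ (s' - s))]
  have hcpow : ContinuousOn (fun t : ℝ => (t : ℂ) ^ (s' - s)) (Ioi 0) :=
    continuousOn_of_forall_continuousAt fun t ht =>
      Complex.continuousAt_ofReal_cpow_const _ _ (Or.inr (ne_of_gt ht))
  refine (hf.norm.const_mul (T ^ (s'.re - s.re))).mono'
    ((hcpow.aestronglyMeasurable measurableSet_Ioi).smul hf.aestronglyMeasurable) ?_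
  filter_upwards [ae_restrict_mem measurableSet_Ioi] with t (ht : 0 < t)
  rcases le_or_gt t T with htT | hTt
  · rw [norm_smul, Complex.norm_cpow_eq_rpow_re_of_pos ht, Complex.sub_re]
    gcongr
  · simp [hfT t hTt]

theorem mellin_add_natCast_eq_setIntegral {f : ℝ → E} {T : ℝ} (hfT : ∀ t, T < t → f t = 0)
    (s : ℂ) (n : ℕ) :
    mellin f (s + n) = ∫ t in Ioc 0 T, t ^ n • ((t : ℂ) ^ (s - 1) • f t) := by
  rw [mellin, setIntegral_eq_of_subset_of_forall_sdiff_eq_zero measurableSet_Ioi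
    Ioc_subset_Ioi_self fun t ht => ?_]
  · refine setIntegral_congr_fun measurableSet_Ioc fun t ht => ?_
    rw [← Complex.coe_smul, smul_smul, add_sub_right_comm,
      Complex.cpow_add _ _ (Complex.ofReal_ne_zero.2 ht.1.ne'), Complex.cpow_natCast,
      Complex.ofReal_pow, mul_comm]
  · rw [hfT t (not_le.1 fun htT => ht.2 ⟨ht.1, htT⟩), smul_zero]

theorem ae_eq_zero_of_mellin_add_natCast_eq_zero [CompleteSpace E] {f : ℝ → E} {T : ℝ}
    (hfT : ∀ t, T < t → f t = 0) {s : ℂ} (hf : MellinConvergent f s)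
    (h : ∀ n : ℕ, mellin f (s + n) = 0) :
    ∀ᵐ t ∂(volume.restrict (Ioi 0)), f t = 0 := by
  have hψ := ae_eq_zero_of_integral_pow_smul_eq_zero (c := 0) (d := T)
    ((ae_restrict_mem measurableSet_Ioc).mono fun _ hx => Ioc_subset_Icc_self hx)
    (hf.mono_set Ioc_subset_Ioi_self)
    fun n => (mellin_add_natCast_eq_setIntegral hfT s n).symm.trans (h n)
  rw [Filter.EventuallyEq, ae_restrict_iff' measurableSet_Ioc] at hψ
  rw [ae_restrict_iff' measurableSet_Ioi]
  filter_upwards [hψ] with t htψ ht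
  rcases le_or_gt t T with htT | hTt
  · exact (smul_eq_zero.1 (htψ ⟨ht, htT⟩)).resolve_left
      fun h0 => ht.ne' (Complex.ofReal_eq_zero.1 ((Complex.cpow_eq_zero_iff _ _).1 h0).1)
  · exact hfT t hTt

end Mellin

theorem mellin_transform_uniqueness_general
    (T : ℝ) (f g : ℝ → ℝ)
    (hfmeas : Measurable f) (hgmeas : Measurable g)
    (hfsupp : ∀ s : ℝ, s ≤ 0 ∨ T < s → f s = 0)
    (hgsupp : ∀ s : ℝ, s ≤ 0 ∨ T < s → g s = 0)
    (a b : ℝ) (hab : a < b)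
    (hfint : ∀ p ∈ Ioo a b, IntegrableOn (fun s => f s * s ^ (p - 1)) (Ioi (0:ℝ)))
    (hgint : ∀ p ∈ Ioo a b, IntegrableOn (fun s => g s * s ^ (p - 1)) (Ioi (0:ℝ)))
    (hMellin : ∀ p ∈ Ioo a b,
      ∫ s in Ioi (0:ℝ), f s * s ^ (p - 1) = ∫ s in Ioi (0:ℝ), g s * s ^ (p - 1)) :
    f =ᵐ[volume] g := by
  set F : ℝ → ℂ := fun t => (f t : ℂ) - g t
  have hFT : ∀ t, T < t → F t = 0 := fun t ht => by
    simp [F, hfsupp t (Or.inr ht), hgsupp t (Or.inr ht)]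
  have hmellin : ∀ p ∈ Ioo a b, HasMellin F p 0 := fun p hp => by
    have := hasMellin_sub (mellinConvergent_ofReal (hfint p hp))
      (mellinConvergent_ofReal (hgint p hp))
    rwa [mellin_ofReal, mellin_ofReal, hMellin p hp, sub_self] at this
  have hconv : ∀ s : ℂ, a < s.re → MellinConvergent F s := fun s hs => by
    obtain ⟨p, hap, hp⟩ := exists_between (lt_min hab hs)
    exact (hmellin p ⟨hap, (lt_min_iff.1 hp).1⟩).1.of_re_le hFT
      (by simpa using (lt_min_iff.1 hp).2.le)
  have hmeas : AEStronglyMeasurable F (volume.restrict (Ioi 0)) := by fun_prop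
  have hzero : EqOn (mellin F) 0 {s : ℂ | a < s.re} :=
    Complex.eqOn_zero_of_eq_zero_on_Ioo
      (mellin_differentiableOn_of_mellinConvergent hmeas hconv)
      (isOpen_lt continuous_const Complex.continuous_re) (convex_halfSpace_re_gt a).isPreconnected
      hab (fun x hx => by simpa using hx.1) fun x hx => (hmellin x hx).2
  have hF0 := ae_eq_zero_of_mellin_add_natCast_eq_zero hFT (hconv (a + 1) (by simp))
    fun n => hzero (by
      simp only [mem_ofPred_eq, Complex.add_re, Complex.ofReal_re, Complex.one_re,
        Complex.natCast_re]
      linarith [n.cast_nonneg (α := ℝ)])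
  rw [ae_restrict_iff' measurableSet_Ioi] at hF0
  filter_upwards [hF0] with t ht
  rcases le_or_gt t 0 with ht0 | ht0
  · rw [hfsupp t (Or.inl ht0), hgsupp t (Or.inl ht0)]
  · exact_mod_cast sub_eq_zero.1 (ht ht0)

/-- Uniqueness of the Mellin transform: two integrable functions supported on `(0,T]`
whose Mellin transforms agree for all `p` in an open interval (where both integrals
converge absolutely) are equal almost everywhere. -/
theorem mellin_transform_uniqueness
    (T : ℝ) (hT : 0 < T) (f g : ℝ → ℝ)
    (hfmeas : Measurable f) (hgmeas : Measurable g)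
    (hfsupp : ∀ s : ℝ, s ≤ 0 ∨ T < s → f s = 0)
    (hgsupp : ∀ s : ℝ, s ≤ 0 ∨ T < s → g s = 0)
    (a b : ℝ) (hab : a < b)
    (hfint : ∀ p ∈ Ioo a b, IntegrableOn (fun s => f s * s ^ (p - 1)) (Ioi (0:ℝ)))
    (hgint : ∀ p ∈ Ioo a b, IntegrableOn (fun s => g s * s ^ (p - 1)) (Ioi (0:ℝ)))
    (hMellin : ∀ p ∈ Ioo a b,
      ∫ s in Ioi (0:ℝ), f s * s ^ (p - 1) = ∫ s in Ioi (0:ℝ), g s * s ^ (p - 1)) :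
    f =ᵐ[volume] g :=
  mellin_transform_uniqueness_general T f g hfmeas hgmeas hfsupp hgsupp a b hab hfint hgint hMellin
end
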